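/- arXiv:2102.08906 — 3 statements merged into one kernel-verified Lean document; each statement's English description precedes it below -/
import Mathlib

section
/- Let H be a real Hilbert space, μ > 0, B : H → H be μ-Lipschitz, and let γ_{n-1}, γ_n > 0 with γ_n < 1/(2μ) (so that 1/(2γ_n) ≥ μ). For points x, x_{n-1}, x_n, y_{n-1} ∈ H and α_{n-1} = ⟨B y_{n-1} - B x, x_n - x_{n-1}⟩, define T_n = (1/γ_n)‖x_n - x‖² + μ‖x_n - y_{n-1}‖² + (1/γ_{n-1} + μ(1+√2))‖x_n - x_{n-1}‖² + 2α_{n-1}. Then T_n ≥ (1/(2γ_n))‖x_n - x‖². -/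
open scoped RealInnerProductSpace

theorem stmt_3 {H : Type*} [NormedAddCommGroup H] [InnerProductSpace ℝ H]
    (μ : ℝ) (hμ : 0 < μ) (B : H → H)
    (hB : ∀ u v : H, ‖B u - B v‖ ≤ μ * ‖u - v‖)
    (γm γn : ℝ) (hγm : 0 < γm) (hγn : 0 < γn) (hstep : γn < 1 / (2 * μ))
    (x xm xn yprev : H) :
    (1 / γn) * ‖xn - x‖ ^ 2 + μ * ‖xn - yprev‖ ^ 2 +
        (1 / γm + μ * (1 + Real.sqrt 2)) * ‖xn - xm‖ ^ 2 +
        2 * ⟪B yprev - B x, xn - xm⟫ ≥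
      (1 / (2 * γn)) * ‖xn - x‖ ^ 2 := by
  set a := ‖xn - yprev‖ with ha
  set b := ‖xn - x‖ with hb
  set c := ‖xn - xm‖ with hc
  have ha0 : 0 ≤ a := norm_nonneg _
  have hb0 : 0 ≤ b := norm_nonneg _
  have hc0 : 0 ≤ c := norm_nonneg _
  have htri : ‖yprev - x‖ ≤ a + b := by
    calc ‖yprev - x‖ ≤ ‖yprev - xn‖ + ‖xn - x‖ := norm_sub_le_norm_sub_add_norm_sub _ _ _
    _ = a + b := by rw [norm_sub_rev]
  have hBn : ‖B yprev - B x‖ ≤ μ * (a + b) :=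
    (hB yprev x).trans (by nlinarith)
  have hcs : |⟪B yprev - B x, xn - xm⟫| ≤ ‖B yprev - B x‖ * c :=
    abs_real_inner_le_norm _ _
  have hip : ⟪B yprev - B x, xn - xm⟫ ≥ -(μ * (a + b) * c) := by
    have := neg_abs_le ⟪B yprev - B x, xn - xm⟫
    nlinarith [mul_le_mul_of_nonneg_right hBn hc0]
  have hμγ : μ ≤ 1 / (2 * γn) := by
    rw [le_div_iff₀ (by positivity)]
    rw [lt_div_iff₀ (by positivity)] at hstep
    nlinarith
  have hs2 : Real.sqrt 2 ^ 2 = 2 := Real.sq_sqrt (by norm_num)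
  have hs1 : (1:ℝ) ≤ Real.sqrt 2 := by
    nlinarith [Real.sqrt_nonneg 2]
  have hγm' : 0 < 1 / γm := by positivity
  have h2 : 1 / (2 * γn) ≤ 1 / γn := by
    rw [div_le_div_iff₀ (by positivity) (by positivity)]; nlinarith
  have hs3 : Real.sqrt 2 ≤ 2 := by nlinarith [Real.sqrt_nonneg 2]
  have heq : 1 / γn = 2 * (1 / (2 * γn)) := by field_simp
  set sq2 := Real.sqrt 2 with hsq2
  have key : 0 ≤ μ * (sq2 / 2) * b ^ 2 - 2 * μ * (b * c) + μ * sq2 * c ^ 2 := by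
    have h0 : 0 ≤ μ * (sq2 / 2) * (b - sq2 * c) ^ 2 := by positivity
    have hexp : μ * (sq2 / 2) * (b - sq2 * c) ^ 2 =
        μ * (sq2 / 2) * b ^ 2 - (sq2 ^ 2) * μ * (b * c) +
          μ * (sq2 ^ 2) * (sq2 / 2) * c ^ 2 := by ring
    rw [hs2] at hexp
    linarith [h0, hexp.symm.le, hexp.le]
  nlinarith [key, mul_nonneg hμ.le (sq_nonneg (a - c)),
    mul_nonneg (sub_nonneg.2 hμγ) (sq_nonneg b),
    mul_nonneg hγm'.le (sq_nonneg c),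
    mul_nonneg (mul_nonneg hμ.le (sub_nonneg.2 hs3)) (sq_nonneg b)]
end

section
/- Let (F_n)_{n∈ℕ} be a filtration on a probability space and let (x_n)_{n∈ℕ} be a sequence of nonnegative random variables such that x_{n-1} is F_n-measurable for every n and ∑_{n∈ℕ} E[x_n | F_n] < +∞ almost surely. Then ∑_{n∈ℕ} x_n < +∞ almost surely. -/
open MeasureTheory Filter Topology
open scoped NNReal ENNReal

section Aux

variable {Ω : Type*} {m0 : MeasurableSpace Ω} {μ : Measure Ω} {ℱ : Filtration ℕ m0}
  {q f : ℕ → Ω → ℝ} {s : Set ℝ}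

/-- Generic version of `leastGE_eq_min`. -/
theorem rs_hitting_eq_min (π : Ω → ℕ) (ω : Ω) {n : ℕ} (hπn : ∀ ω, π ω ≤ n) :
    hittingBtwn q s 0 (π ω) ω = min (π ω) (hittingBtwn q s 0 n ω) := by
  classical
  refine le_antisymm (le_min (hittingBtwn_le _) (hittingBtwn_apply_mono_right _ _ _ _ (hπn ω))) ?_
  by_cases hle : π ω ≤ hittingBtwn q s 0 n ω
  · rw [min_eq_left hle]
    by_cases h : ∃ j ∈ Set.Icc 0 (π ω), q j ω ∈ s
    · refine hle.trans (Eq.le ?_)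
      rw [← hittingBtwn_eq_hittingBtwn_of_exists (hπn ω) h]
    · simp only [hittingBtwn, if_neg h, le_rfl]
  · rw [min_eq_right (not_le.1 hle).le, ← hittingBtwn_eq_hittingBtwn_of_exists (hπn ω) _]
    rw [not_le, hittingBtwn_lt_iff _ (hπn ω)] at hle
    exact
      let ⟨j, hj₁, hj₂⟩ := hle
      ⟨j, ⟨hj₁.1, hj₁.2.le⟩, hj₂⟩

theorem rs_untopA_coe (i : ℕ) : (((i : ℕ) : WithTop ℕ)).untopA = i := rfl

theorem rs_stoppedValue_stoppedValue (q f : ℕ → Ω → ℝ) (s : Set ℝ) (π : Ω → WithTop ℕ) {n : ℕ}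
    (hπn : ∀ ω, π ω ≤ n) : stoppedValue (fun i => stoppedValue f
        (fun ω => ((hittingBtwn q s 0 i ω : ℕ) : WithTop ℕ))) π =
      stoppedValue f (fun ω => min (π ω) ((hittingBtwn q s 0 n ω : ℕ) : WithTop ℕ)) := by
  ext1 ω
  have h := rs_hitting_eq_min (q := q) (s := s) (n := n) (fun ω => (π ω).untopA) ω
    (fun ω => WithTop.untopA_le (hπn ω))
  obtain ⟨k, hk⟩ : ∃ k : ℕ, π ω = (k : WithTop ℕ) :=
    (WithTop.ne_top_iff_exists.mp (ne_top_of_le_ne_top (by simp) (hπn ω))).imp fun _ h => h.symm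
  simp only [stoppedValue]
  have hm : min ((k : ℕ) : WithTop ℕ) ((hittingBtwn q s 0 n ω : ℕ) : WithTop ℕ) =
      ((min k (hittingBtwn q s 0 n ω) : ℕ) : WithTop ℕ) := (WithTop.coe_min _ _).symm
  rw [h, hk, rs_untopA_coe, hm]
  rfl

/-- Generic version of `Submartingale.stoppedValue_leastGE`: stopping a submartingale at the
hitting times of an adapted process gives a submartingale. -/
theorem rs_submartingale_stoppedValue [IsFiniteMeasure μ] (hq : Adapted ℱ q)
    (hs : MeasurableSet s) (hf : Submartingale f ℱ μ) :
    Submartingale (fun i => stoppedValue f (fun ω => ((hittingBtwn q s 0 i ω : ℕ) : WithTop ℕ))) ℱ μ := by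
  have hst : ∀ i, IsStoppingTime ℱ (fun ω => ((hittingBtwn q s 0 i ω : ℕ) : WithTop ℕ)) := fun i =>
    hq.isStoppingTime_hittingBtwn hs
  rw [submartingale_iff_expected_stoppedValue_mono]
  · intro σ π hσ hπ hσ_le_π hπ_bdd
    obtain ⟨n, hπ_le_n⟩ := hπ_bdd
    simp_rw [rs_stoppedValue_stoppedValue q f s σ fun i => (hσ_le_π i).trans (hπ_le_n i)]
    simp_rw [rs_stoppedValue_stoppedValue q f s π hπ_le_n]
    refine hf.expected_stoppedValue_mono ?_ ?_ ?_ fun ω => (min_le_left _ _).trans (hπ_le_n ω)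
    · exact hσ.min (hst n)
    · exact hπ.min (hst n)
    · exact fun ω => min_le_min (hσ_le_π ω) le_rfl
  · exact fun i => stronglyMeasurable_stoppedValue_of_le
      hf.stronglyAdapted.isStronglyProgressive_of_discrete
      (hst i) fun ω => WithTop.coe_le_coe.mpr (hittingBtwn_le ω)
  · exact fun i => integrable_stoppedValue _ (hst i) hf.integrable fun ω =>
      WithTop.coe_le_coe.mpr (hittingBtwn_le ω)

end Aux

theorem stmt_8 {Ω : Type*} {m : MeasurableSpace Ω} (P : Measure Ω)
    [IsProbabilityMeasure P] (ℱ : Filtration ℕ m)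
    (x : ℕ → Ω → ℝ)
    (hnn : ∀ n ω, 0 ≤ x n ω)
    (hint : ∀ n, Integrable (x n) P)
    (hmeas : ∀ n, StronglyMeasurable[ℱ (n + 1)] (x n))
    (hsum : ∀ᵐ ω ∂P, Summable (fun n => (P[x n | ℱ n]) ω)) :
    ∀ᵐ ω ∂P, Summable (fun n => x n ω) := by
  classical
  -- partial sums
  set F : ℕ → Ω → ℝ := fun n ω => ∑ k ∈ Finset.range n, x k ω with hF
  have hFadp : StronglyAdapted ℱ F := fun n =>
    Finset.stronglyMeasurable_fun_sum (Finset.range n) fun k hk =>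
      (hmeas k).mono (ℱ.mono (Nat.succ_le_of_lt (Finset.mem_range.mp hk)))
  have hFint : ∀ n, Integrable (F n) P := fun n =>
    integrable_finset_sum (Finset.range n) fun k _ => hint k
  set p : ℕ → Ω → ℝ := predictablePart F ℱ P with hp
  set M : ℕ → Ω → ℝ := martingalePart F ℱ P with hMdef
  have hM : Martingale M ℱ P := martingale_martingalePart hFadp hFint
  -- predictable part is the sum of the conditional expectations
  have hdiff : ∀ i : ℕ, F (i + 1) - F i = x i := by
    intro i; ext ω; simp [hF, Finset.sum_range_succ]
  have hpeq : ∀ n, p n = fun ω => ∑ i ∈ Finset.range n, (P[x i|ℱ i]) ω := by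
    intro n
    ext ω
    simp only [hp, predictablePart, Finset.sum_apply]
    exact Finset.sum_congr rfl fun i _ => by rw [hdiff i]
  have hMF : ∀ n ω, M n ω = F n ω - p n ω := fun n ω => rfl
  have hM0 : M 0 = 0 := by
    ext ω
    simp [hMdef, martingalePart, hF, hp, predictablePart]
  -- the auxiliary process whose hitting times we use
  set q : ℕ → Ω → ℝ := fun n => p (n + 1) with hq
  have hqadp : Adapted ℱ q := stronglyAdapted_predictablePart.adapted
  -- p is bounded by c along any trajectory up to (and including) the hitting time
  have hp_le : ∀ (c : ℝ) (i : ℕ) (ω : Ω), p (hittingBtwn q (Set.Ioi c) 0 i ω) ω ≤ max c 0 := by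
    intro c i ω
    rcases Nat.eq_zero_or_pos (hittingBtwn q (Set.Ioi c) 0 i ω) with h0 | hpos
    · rw [h0]
      simp [hp, predictablePart, le_max_iff]
    · have hlt : hittingBtwn q (Set.Ioi c) 0 i ω - 1 < hittingBtwn q (Set.Ioi c) 0 i ω := by omega
      have hnm := notMem_of_lt_hittingBtwn hlt (Nat.zero_le _)
      simp only [hq, Set.mem_Ioi, not_lt] at hnm
      have heq2 : hittingBtwn q (Set.Ioi c) 0 i ω - 1 + 1 = hittingBtwn q (Set.Ioi c) 0 i ω := by omega
      refine le_max_of_le_left ?_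
      calc p (hittingBtwn q (Set.Ioi c) 0 i ω) ω
          = p (hittingBtwn q (Set.Ioi c) 0 i ω - 1 + 1) ω := by rw [heq2]
        _ ≤ c := hnm
  -- for each c : ℕ, the stopped martingale converges a.e.
  have hconv : ∀ c : ℕ, ∀ᵐ ω ∂P, ∃ L : ℝ,
      Tendsto (fun i => stoppedValue M (fun ω => ((hittingBtwn q (Set.Ioi (c : ℝ)) 0 i ω : ℕ) : WithTop ℕ)) ω) atTop (𝓝 L) := by
    intro c
    have hsubM : Submartingale (fun i => stoppedValue M (fun ω => ((hittingBtwn q (Set.Ioi (c : ℝ)) 0 i ω : ℕ) : WithTop ℕ))) ℱ P :=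
      rs_submartingale_stoppedValue hqadp measurableSet_Ioi hM.submartingale
    have hsubN : Submartingale (fun i => stoppedValue (-M) (fun ω => ((hittingBtwn q (Set.Ioi (c : ℝ)) 0 i ω : ℕ) : WithTop ℕ))) ℱ P :=
      rs_submartingale_stoppedValue hqadp measurableSet_Ioi hM.neg.submartingale
    -- bound on the negative: stoppedValue (-M) ≤ c (since F ≥ 0, M ≥ -p ≥ -c when stopped)
    have hle : ∀ i ω, stoppedValue (-M) (fun ω => ((hittingBtwn q (Set.Ioi (c : ℝ)) 0 i ω : ℕ) : WithTop ℕ)) ω ≤ max (c : ℝ) 0 := by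
      intro i ω
      have h1 : (0 : ℝ) ≤ F (hittingBtwn q (Set.Ioi (c : ℝ)) 0 i ω) ω :=
        Finset.sum_nonneg fun k _ => hnn k ω
      have h2 := hp_le (c : ℝ) i ω
      simp only [stoppedValue, Pi.neg_apply, hMF, rs_untopA_coe]
      linarith
    -- integral of stoppedValue (-M) is nonneg
    have hint0 : ∀ i, 0 ≤ ∫ ω, stoppedValue (-M) (fun ω => ((hittingBtwn q (Set.Ioi (c : ℝ)) 0 i ω : ℕ) : WithTop ℕ)) ω ∂P := by
      intro i
      have h0 : stoppedValue (-M) (fun ω => ((hittingBtwn q (Set.Ioi (c : ℝ)) 0 0 ω : ℕ) : WithTop ℕ)) = 0 := by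
        ext ω
        have : hittingBtwn q (Set.Ioi (c : ℝ)) 0 0 ω = 0 := le_antisymm (hittingBtwn_le ω) (Nat.zero_le _)
        simp only [stoppedValue, this, rs_untopA_coe]
        simp [hM0]
      have := hsubN.setIntegral_le (Nat.zero_le i) MeasurableSet.univ
      rw [h0] at this
      simpa [setIntegral_univ] using this
    -- L¹ bound
    have hbdd : ∀ i, eLpNorm (stoppedValue M (fun ω => ((hittingBtwn q (Set.Ioi (c : ℝ)) 0 i ω : ℕ) : WithTop ℕ))) 1 P ≤
        (2 * ((c : ℝ≥0) + 1) : ℝ≥0) := by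
      intro i
      have h1 : eLpNorm (stoppedValue (-M) (fun ω => ((hittingBtwn q (Set.Ioi (c : ℝ)) 0 i ω : ℕ) : WithTop ℕ))) 1 P ≤
          2 * P Set.univ * ENNReal.ofReal (max (c : ℝ) 0) :=
        eLpNorm_one_le_of_le' (hsubN.integrable i) (hint0 i) (ae_of_all _ (hle i))
      have h2 : eLpNorm (stoppedValue M (fun ω => ((hittingBtwn q (Set.Ioi (c : ℝ)) 0 i ω : ℕ) : WithTop ℕ))) 1 P =
          eLpNorm (stoppedValue (-M) (fun ω => ((hittingBtwn q (Set.Ioi (c : ℝ)) 0 i ω : ℕ) : WithTop ℕ))) 1 P := by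
        have h3 : stoppedValue (-M) (fun ω => ((hittingBtwn q (Set.Ioi (c : ℝ)) 0 i ω : ℕ) : WithTop ℕ)) =
            -(stoppedValue M (fun ω => ((hittingBtwn q (Set.Ioi (c : ℝ)) 0 i ω : ℕ) : WithTop ℕ))) := by
          ext ω; simp [stoppedValue]
        rw [h3, eLpNorm_neg]
      rw [h2]
      refine h1.trans ?_
      rw [measure_univ, mul_one, max_eq_left (by positivity : (0 : ℝ) ≤ (c : ℝ)),
        ENNReal.ofReal_natCast]
      calc (2 : ℝ≥0∞) * (c : ℕ) ≤ 2 * ((c : ℕ) + 1) := by gcongr <;> simp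
        _ = ((2 * ((c : ℝ≥0) + 1) : ℝ≥0) : ℝ≥0∞) := by push_cast; ring
    exact hsubM.exists_ae_tendsto_of_bdd hbdd
  rw [← ae_all_iff] at hconv
  filter_upwards [hconv, hsum] with ω hω hsω
  -- partial sums of the conditional expectations are bounded above
  have htend : Tendsto (fun n => p n ω) atTop (𝓝 (∑' n, (P[x n|ℱ n]) ω)) := by
    have h := hsω.hasSum.tendsto_sum_nat
    have h2 : (fun n => ∑ i ∈ Finset.range n, (P[x i|ℱ i]) ω) = fun n => p n ω := by
      funext n; rw [hpeq n]
    rwa [h2] at h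
  obtain ⟨b, hb⟩ := htend.bddAbove_range
  obtain ⟨c, hc⟩ := exists_nat_gt b
  have hple : ∀ n, p n ω ≤ (c : ℝ) := fun n =>
    le_trans (hb (Set.mem_range_self n)) hc.le
  -- the hitting time never triggers, so the stopped martingale is the martingale itself
  have hnohit : ∀ i, hittingBtwn q (Set.Ioi (c : ℝ)) 0 i ω = i := by
    intro i
    unfold hittingBtwn
    rw [if_neg]
    push_neg
    intro j _
    simp only [hq, Set.mem_Ioi, not_lt]
    exact hple (j + 1)
  obtain ⟨L, hL⟩ := hω c
  have hMconv : Tendsto (fun i => M i ω) atTop (𝓝 L) := by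
    have h2 : (fun i => stoppedValue M (fun ω => ((hittingBtwn q (Set.Ioi (c : ℝ)) 0 i ω : ℕ) : WithTop ℕ)) ω) =
        fun i => M i ω := by
      funext i; simp [stoppedValue, hnohit i, rs_untopA_coe]
    rwa [h2] at hL
  -- so F n ω = M n ω + p n ω converges, hence the partial sums are bounded
  have hFconv : Tendsto (fun n => F n ω) atTop (𝓝 (L + ∑' n, (P[x n|ℱ n]) ω)) := by
    have h := hMconv.add htend
    have h2 : (fun n => M n ω + p n ω) = fun n => F n ω := by
      funext n; rw [hMF]; ring
    rwa [h2] at h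
  obtain ⟨B, hB⟩ := hFconv.bddAbove_range
  exact summable_of_sum_range_le (c := B) (fun n => hnn n ω) fun n =>
    hB (Set.mem_range_self n)
end

section
/- Let H be a real Hilbert space, A : H → 2^H maximally monotone, B : H → H monotone and μ-Lipschitz, and γ > 0. Given x_{n-1}, x_n ∈ H, set y_n = 2x_n - x_{n-1} and x_{n+1} = J_{γA}(x_n - γ B y_n), where J_{γA} = (Id + γA)^{-1}. Then for every x ∈ zer(A+B): ‖x_{n+1} - x‖² + ‖x_{n+1} - y_n‖² + 2‖x_{n+1} - x_n‖² + 2γ⟨B y_n - B x, x_{n+1} - x_n⟩ ≤ ‖x_n - x‖² + 2γ⟨B y_{n-1} - B x, x_n - x_{n-1}⟩ + 2γ⟨B y_{n-1} - B y_n, x_{n+1} - y_n⟩ + ‖x_n - y_n‖². -/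
open scoped RealInnerProductSpace

def MonotoneOp {H : Type*} [NormedAddCommGroup H] [InnerProductSpace ℝ H]
    (A : H → Set H) : Prop :=
  ∀ x y u v : H, u ∈ A x → v ∈ A y → 0 ≤ ⟪u - v, x - y⟫

def MaximallyMonotoneOp {H : Type*} [NormedAddCommGroup H] [InnerProductSpace ℝ H]
    (A : H → Set H) : Prop :=
  MonotoneOp A ∧
    ∀ A' : H → Set H, MonotoneOp A' → (∀ x, A x ⊆ A' x) → ∀ x, A' x ⊆ A x

theorem stmt_10 {H : Type*} [NormedAddCommGroup H] [InnerProductSpace ℝ H]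
    (A : H → Set H) (hA : MaximallyMonotoneOp A)
    (μ : ℝ) (hμ : 0 < μ) (B : H → H)
    (hBmono : ∀ x y : H, 0 ≤ ⟪B x - B y, x - y⟫)
    (hBlip : ∀ x y : H, ‖B x - B y‖ ≤ μ * ‖x - y‖)
    (γ : ℝ) (hγ : 0 < γ)
    (xm xn ym yn x1 : H)
    (hyn : yn = 2 • xn - xm)
    -- x_n = J_{γA}(x_{n-1} - γ B y_{n-1}), i.e. (x_{n-1} - γ B y_{n-1} - x_n)/γ ∈ A x_n
    (hxn : (1 / γ) • (xm - γ • B ym - xn) ∈ A xn)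
    -- x_{n+1} = J_{γA}(x_n - γ B y_n), i.e. (x_n - γ B y_n - x_{n+1})/γ ∈ A x_{n+1}
    (hx1 : (1 / γ) • (xn - γ • B yn - x1) ∈ A x1)
    (x : H) (hx : -B x ∈ A x) :
    ‖x1 - x‖ ^ 2 + ‖x1 - yn‖ ^ 2 + 2 * ‖x1 - xn‖ ^ 2 +
        2 * γ * ⟪B yn - B x, x1 - xn⟫ ≤
      ‖xn - x‖ ^ 2 + 2 * γ * ⟪B ym - B x, xn - xm⟫ +
        2 * γ * ⟪B ym - B yn, x1 - yn⟫ + ‖xn - yn‖ ^ 2 := by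
  have hγ' : γ ≠ 0 := ne_of_gt hγ
  have hmono := hA.1
  have h1 := hmono x1 x _ (-B x) hx1 hx
  have h2 := hmono xn x1 _ _ hxn hx1
  have h3 := hBmono yn x
  have h1' : 0 ≤ γ * ⟪(1 / γ) • (xn - γ • B yn - x1) - -B x, x1 - x⟫ :=
    mul_nonneg hγ.le h1
  have h2' : 0 ≤ γ * ⟪(1 / γ) • (xm - γ • B ym - xn) - (1 / γ) • (xn - γ • B yn - x1), xn - x1⟫ :=
    mul_nonneg hγ.le h2
  simp only [inner_sub_left, inner_sub_right, inner_neg_left, real_inner_smul_left,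
    real_inner_smul_right] at h1' h2' ⊢
  field_simp at h1' h2'
  subst hyn
  simp only [← real_inner_self_eq_norm_sq, two_smul, inner_sub_left, inner_sub_right,
    inner_add_left, inner_add_right] at h1' h2' h3 ⊢
  linarith [real_inner_comm xm xn, real_inner_comm xm x1, real_inner_comm xm x,
    real_inner_comm xn x1, real_inner_comm xn x, real_inner_comm x1 x,
    real_inner_comm (B (xn + xn - xm)) xm, real_inner_comm (B (xn + xn - xm)) xn,
    real_inner_comm (B (xn + xn - xm)) x1, real_inner_comm (B (xn + xn - xm)) x,
    real_inner_comm (B x) xm, real_inner_comm (B x) xn, real_inner_comm (B x) x1,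
    real_inner_comm (B x) x, mul_pos hγ hγ,
    mul_le_mul_of_nonneg_left h3 (le_of_lt (by linarith : (0:ℝ) < 2*γ))]
end
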